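/- arXiv:2407.18833 — 5 statements merged into one kernel-verified Lean document; each statement's English description precedes it below -/
import Mathlib

section
/- (Proposition 1) The observer candidate Σ̂ is an acceptor for the system Σ if and only if its matrices satisfy the acceptor equations: (i) (I_n − Dy C) E + (A_UIO Dy − By) F = 0; (ii) Dy F = 0; (iii) A_UIO = (I_n − Dy C) A + (A_UIO Dy − By) C; (iv) Bu = (I_n − Dy C) B − By D; (v) Du = −Dy D. -/
open Matrix Filter

noncomputable section

/-- A real square matrix is Schur stable if all its complex eigenvalues
have modulus strictly less than 1. -/
def SchurStable {n : ℕ} (M : Matrix (Fin n) (Fin n) ℝ) : Prop :=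
  ∀ μ ∈ spectrum ℂ (M.map (algebraMap ℝ ℂ)), ‖μ‖ < 1

/-- `(x, u, y, d)` is a solution of the system `Σ`:
`x(t+1) = A x(t) + B u(t) + E d(t)`, `y(t) = C x(t) + D u(t) + F d(t)`. -/
def SigmaSol {n m p r : ℕ}
    (A : Matrix (Fin n) (Fin n) ℝ) (B : Matrix (Fin n) (Fin m) ℝ)
    (Cm : Matrix (Fin p) (Fin n) ℝ) (Dm : Matrix (Fin p) (Fin m) ℝ)
    (E : Matrix (Fin n) (Fin r) ℝ) (F : Matrix (Fin p) (Fin r) ℝ)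
    (x : ℕ → Fin n → ℝ) (u : ℕ → Fin m → ℝ) (y : ℕ → Fin p → ℝ)
    (d : ℕ → Fin r → ℝ) : Prop :=
  ∀ t : ℕ,
    x (t + 1) = A.mulVec (x t) + B.mulVec (u t) + E.mulVec (d t) ∧
    y t = Cm.mulVec (x t) + Dm.mulVec (u t) + F.mulVec (d t)

/-- `(x̂, u, y, z)` is a solution of the observer candidate `Σ̂`:
`z(t+1) = A_UIO z(t) + Bu u(t) + By y(t)`, `x̂(t) = z(t) + Du u(t) + Dy y(t)`. -/
def ObsSol {n m p : ℕ}
    (Auio : Matrix (Fin n) (Fin n) ℝ) (Bu : Matrix (Fin n) (Fin m) ℝ)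
    (By : Matrix (Fin n) (Fin p) ℝ) (Du : Matrix (Fin n) (Fin m) ℝ)
    (Dy : Matrix (Fin n) (Fin p) ℝ)
    (xh : ℕ → Fin n → ℝ) (u : ℕ → Fin m → ℝ) (y : ℕ → Fin p → ℝ)
    (z : ℕ → Fin n → ℝ) : Prop :=
  ∀ t : ℕ,
    z (t + 1) = Auio.mulVec (z t) + Bu.mulVec (u t) + By.mulVec (y t) ∧
    xh t = z t + Du.mulVec (u t) + Dy.mulVec (y t)

/-- `Σ̂` is an acceptor for `Σ`: every solution of `Σ` can be tracked exactly. -/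
def IsAcceptor {n m p r : ℕ}
    (A : Matrix (Fin n) (Fin n) ℝ) (B : Matrix (Fin n) (Fin m) ℝ)
    (Cm : Matrix (Fin p) (Fin n) ℝ) (Dm : Matrix (Fin p) (Fin m) ℝ)
    (E : Matrix (Fin n) (Fin r) ℝ) (F : Matrix (Fin p) (Fin r) ℝ)
    (Auio : Matrix (Fin n) (Fin n) ℝ) (Bu : Matrix (Fin n) (Fin m) ℝ)
    (By : Matrix (Fin n) (Fin p) ℝ) (Du : Matrix (Fin n) (Fin m) ℝ)
    (Dy : Matrix (Fin n) (Fin p) ℝ) : Prop :=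
  ∀ (x : ℕ → Fin n → ℝ) (u : ℕ → Fin m → ℝ) (y : ℕ → Fin p → ℝ)
    (d : ℕ → Fin r → ℝ), SigmaSol A B Cm Dm E F x u y d →
      ∃ z : ℕ → Fin n → ℝ, ObsSol Auio Bu By Du Dy x u y z

/-- `Σ̂` is an unknown-input observer (UIO) for `Σ`: it is an acceptor and
the estimation error tends to zero for all matching solutions. -/
def IsUIO {n m p r : ℕ}
    (A : Matrix (Fin n) (Fin n) ℝ) (B : Matrix (Fin n) (Fin m) ℝ)
    (Cm : Matrix (Fin p) (Fin n) ℝ) (Dm : Matrix (Fin p) (Fin m) ℝ)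
    (E : Matrix (Fin n) (Fin r) ℝ) (F : Matrix (Fin p) (Fin r) ℝ)
    (Auio : Matrix (Fin n) (Fin n) ℝ) (Bu : Matrix (Fin n) (Fin m) ℝ)
    (By : Matrix (Fin n) (Fin p) ℝ) (Du : Matrix (Fin n) (Fin m) ℝ)
    (Dy : Matrix (Fin n) (Fin p) ℝ) : Prop :=
  IsAcceptor A B Cm Dm E F Auio Bu By Du Dy ∧
  ∀ (x : ℕ → Fin n → ℝ) (u : ℕ → Fin m → ℝ) (y : ℕ → Fin p → ℝ)
    (d : ℕ → Fin r → ℝ) (xh : ℕ → Fin n → ℝ) (z : ℕ → Fin n → ℝ),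
      SigmaSol A B Cm Dm E F x u y d → ObsSol Auio Bu By Du Dy xh u y z →
      Tendsto (fun t => x t - xh t) atTop (nhds 0)

/-- Row index type of the data matrix `Φ_d = [X_p; X_f; U_p; U_f; Y_p; Y_f]`. -/
abbrev RowIdx (n m p : ℕ) := (Fin n ⊕ Fin n) ⊕ ((Fin m ⊕ Fin m) ⊕ (Fin p ⊕ Fin p))

/-- The data matrix `Φ_d = [X_p; X_f; U_p; U_f; Y_p; Y_f] ∈ ℝ^{2(n+m+p)×(T−1)}`. -/
def PhiD {n m p : ℕ} (T : ℕ) (xd : ℕ → Fin n → ℝ) (ud : ℕ → Fin m → ℝ)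
    (yd : ℕ → Fin p → ℝ) : Matrix (RowIdx n m p) (Fin (T - 1)) ℝ :=
  Matrix.of fun i j =>
    match i with
    | Sum.inl (Sum.inl a) => xd j.1 a
    | Sum.inl (Sum.inr a) => xd (j.1 + 1) a
    | Sum.inr (Sum.inl (Sum.inl a)) => ud j.1 a
    | Sum.inr (Sum.inl (Sum.inr a)) => ud (j.1 + 1) a
    | Sum.inr (Sum.inr (Sum.inl a)) => yd j.1 a
    | Sum.inr (Sum.inr (Sum.inr a)) => yd (j.1 + 1) a

/-- The stacked vector `(x(t), x(t+1), u(t), u(t+1), y(t), y(t+1))`. -/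
def stackVec {n m p : ℕ} (x : ℕ → Fin n → ℝ) (u : ℕ → Fin m → ℝ)
    (y : ℕ → Fin p → ℝ) (t : ℕ) : RowIdx n m p → ℝ :=
  fun i =>
    match i with
    | Sum.inl (Sum.inl a) => x t a
    | Sum.inl (Sum.inr a) => x (t + 1) a
    | Sum.inr (Sum.inl (Sum.inl a)) => u t a
    | Sum.inr (Sum.inl (Sum.inr a)) => u (t + 1) a
    | Sum.inr (Sum.inr (Sum.inl a)) => y t a
    | Sum.inr (Sum.inr (Sum.inr a)) => y (t + 1) a

/-- The matrix `[X_p; U_p; U_f; D_p; D_f]` appearing in the Assumption. -/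
def HistMat {n m r : ℕ} (T : ℕ) (xd : ℕ → Fin n → ℝ) (ud : ℕ → Fin m → ℝ)
    (dd : ℕ → Fin r → ℝ) :
    Matrix (Fin n ⊕ ((Fin m ⊕ Fin m) ⊕ (Fin r ⊕ Fin r))) (Fin (T - 1)) ℝ :=
  Matrix.of fun i j =>
    match i with
    | Sum.inl a => xd j.1 a
    | Sum.inr (Sum.inl (Sum.inl a)) => ud j.1 a
    | Sum.inr (Sum.inl (Sum.inr a)) => ud (j.1 + 1) a
    | Sum.inr (Sum.inr (Sum.inl a)) => dd j.1 a
    | Sum.inr (Sum.inr (Sum.inr a)) => dd (j.1 + 1) a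

/-!
The output equation of `Σ̂` leaves no freedom in `z`: necessarily `z = x - Du u - Dy y`.
Hence `Σ̂` is an acceptor iff this `z` satisfies the state equation of `Σ̂` along every
solution of `Σ`, i.e. iff a one-step defect, linear in `(x(t), u(t), u(t+1), d(t), d(t+1))`,
vanishes identically. These five vectors can be prescribed freely, so each of the five
coefficient matrices must vanish, and these five conditions are the acceptor equations.
-/

namespace Matrix

variable {ι κ R : Type*} [Fintype κ] [DecidableEq κ] [NonAssocSemiring R]

lemma eq_zero_of_forall_mulVec_eq_zero {M : Matrix ι κ R} (h : ∀ v, M *ᵥ v = 0) : M = 0 :=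
  ext_of_mulVec_single fun i => by rw [h, zero_mulVec]

end Matrix

lemma ObsSol.state_eq {n m p : ℕ} {Auio : Matrix (Fin n) (Fin n) ℝ} {Bu : Matrix (Fin n) (Fin m) ℝ}
    {By : Matrix (Fin n) (Fin p) ℝ} {Du : Matrix (Fin n) (Fin m) ℝ}
    {Dy : Matrix (Fin n) (Fin p) ℝ} {xh : ℕ → Fin n → ℝ} {u : ℕ → Fin m → ℝ} {y : ℕ → Fin p → ℝ}
    {z : ℕ → Fin n → ℝ} (h : ObsSol Auio Bu By Du Dy xh u y z) (t : ℕ) :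
    z t = xh t - Du *ᵥ u t - Dy *ᵥ y t := by
  rw [(h t).2]
  abel

section Acceptor

variable {n m p r : ℕ}
  (A : Matrix (Fin n) (Fin n) ℝ) (B : Matrix (Fin n) (Fin m) ℝ)
  (Cm : Matrix (Fin p) (Fin n) ℝ) (Dm : Matrix (Fin p) (Fin m) ℝ)
  (E : Matrix (Fin n) (Fin r) ℝ) (F : Matrix (Fin p) (Fin r) ℝ)
  (Auio : Matrix (Fin n) (Fin n) ℝ) (Bu : Matrix (Fin n) (Fin m) ℝ)
  (By : Matrix (Fin n) (Fin p) ℝ) (Du : Matrix (Fin n) (Fin m) ℝ)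
  (Dy : Matrix (Fin n) (Fin p) ℝ)

def stateTraj (x₀ : Fin n → ℝ) (u : ℕ → Fin m → ℝ) (d : ℕ → Fin r → ℝ) : ℕ → Fin n → ℝ
  | 0 => x₀
  | t + 1 => A *ᵥ stateTraj x₀ u d t + B *ᵥ u t + E *ᵥ d t

lemma sigmaSol_stateTraj (x₀ : Fin n → ℝ) (u : ℕ → Fin m → ℝ) (d : ℕ → Fin r → ℝ) :
    SigmaSol A B Cm Dm E F (stateTraj A B E x₀ u d) u
      (fun t => Cm *ᵥ stateTraj A B E x₀ u d t + Dm *ᵥ u t + F *ᵥ d t) d :=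
  fun _ => ⟨rfl, rfl⟩

def stepDefect (x₀ : Fin n → ℝ) (u₀ u₁ : Fin m → ℝ) (d₀ d₁ : Fin r → ℝ) : Fin n → ℝ :=
  let x₁ := A *ᵥ x₀ + B *ᵥ u₀ + E *ᵥ d₀
  let y₀ := Cm *ᵥ x₀ + Dm *ᵥ u₀ + F *ᵥ d₀
  let y₁ := Cm *ᵥ x₁ + Dm *ᵥ u₁ + F *ᵥ d₁
  (x₁ - Du *ᵥ u₁ - Dy *ᵥ y₁) - (Auio *ᵥ (x₀ - Du *ᵥ u₀ - Dy *ᵥ y₀) + Bu *ᵥ u₀ + By *ᵥ y₀)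

lemma stepDefect_eq (x₀ : Fin n → ℝ) (u₀ u₁ : Fin m → ℝ) (d₀ d₁ : Fin r → ℝ) :
    stepDefect A B Cm Dm E F Auio Bu By Du Dy x₀ u₀ u₁ d₀ d₁ =
      ((1 - Dy * Cm) * A + (Auio * Dy - By) * Cm - Auio) *ᵥ x₀
      + ((1 - Dy * Cm) * B - By * Dm - Bu + Auio * (Du + Dy * Dm)) *ᵥ u₀
      - (Du + Dy * Dm) *ᵥ u₁
      + ((1 - Dy * Cm) * E + (Auio * Dy - By) * F) *ᵥ d₀
      - (Dy * F) *ᵥ d₁ := by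
  simp only [stepDefect, add_mulVec, sub_mulVec, one_mulVec, mulVec_add, mulVec_sub,
    ← mulVec_mulVec]
  abel

lemma isAcceptor_iff_forall_stepDefect_eq_zero :
    IsAcceptor A B Cm Dm E F Auio Bu By Du Dy ↔
      ∀ x₀ u₀ u₁ d₀ d₁, stepDefect A B Cm Dm E F Auio Bu By Du Dy x₀ u₀ u₁ d₀ d₁ = 0 := by
  constructor
  · intro hacc x₀ u₀ u₁ d₀ d₁
    let u : ℕ → Fin m → ℝ := fun t => if t = 0 then u₀ else u₁
    let d : ℕ → Fin r → ℝ := fun t => if t = 0 then d₀ else d₁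
    obtain ⟨z, hz⟩ := hacc _ u _ d (sigmaSol_stateTraj A B Cm Dm E F x₀ u d)
    have hstep := (hz 0).1
    rw [hz.state_eq 0, hz.state_eq 1] at hstep
    exact sub_eq_zero.mpr hstep
  · intro hdef x u y d hsol
    refine ⟨fun t => x t - Du *ᵥ u t - Dy *ᵥ y t, fun t => ⟨?_, by dsimp only; abel⟩⟩
    dsimp only
    rw [(hsol (t + 1)).2, (hsol t).1, (hsol t).2]
    exact sub_eq_zero.mp (hdef (x t) (u t) (u (t + 1)) (d t) (d (t + 1)))

lemma forall_stepDefect_eq_zero_iff :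
    (∀ x₀ u₀ u₁ d₀ d₁, stepDefect A B Cm Dm E F Auio Bu By Du Dy x₀ u₀ u₁ d₀ d₁ = 0) ↔
      ((1 - Dy * Cm) * E + (Auio * Dy - By) * F = 0 ∧
      Dy * F = 0 ∧
      Auio = (1 - Dy * Cm) * A + (Auio * Dy - By) * Cm ∧
      Bu = (1 - Dy * Cm) * B - By * Dm ∧
      Du = -(Dy * Dm)) := by
  simp_rw [stepDefect_eq]
  constructor
  · intro h
    have hx := eq_zero_of_forall_mulVec_eq_zero fun v => by simpa using h v 0 0 0 0
    have hu₀ := eq_zero_of_forall_mulVec_eq_zero fun v => by simpa using h 0 v 0 0 0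
    have hu₁ := eq_zero_of_forall_mulVec_eq_zero fun v => by simpa using h 0 0 v 0 0
    have hd₀ := eq_zero_of_forall_mulVec_eq_zero fun v => by simpa using h 0 0 0 v 0
    have hd₁ := eq_zero_of_forall_mulVec_eq_zero fun v => by simpa using h 0 0 0 0 v
    rw [hu₁, Matrix.mul_zero, add_zero, sub_eq_zero] at hu₀
    exact ⟨hd₀, hd₁, (sub_eq_zero.mp hx).symm, hu₀.symm, eq_neg_of_add_eq_zero_left hu₁⟩
  · rintro ⟨hd₀, hd₁, hx, hu₀, hu₁⟩ x₀ u₀ u₁ d₀ d₁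
    rw [hu₁, neg_add_cancel, ← hu₀, ← hx, hd₀, hd₁]
    simp

end Acceptor

theorem proposition1_general {n m p r : ℕ}
    (A : Matrix (Fin n) (Fin n) ℝ) (B : Matrix (Fin n) (Fin m) ℝ)
    (Cm : Matrix (Fin p) (Fin n) ℝ) (Dm : Matrix (Fin p) (Fin m) ℝ)
    (E : Matrix (Fin n) (Fin r) ℝ) (F : Matrix (Fin p) (Fin r) ℝ)
    (Auio : Matrix (Fin n) (Fin n) ℝ) (Bu : Matrix (Fin n) (Fin m) ℝ)
    (By : Matrix (Fin n) (Fin p) ℝ) (Du : Matrix (Fin n) (Fin m) ℝ)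
    (Dy : Matrix (Fin n) (Fin p) ℝ) :
    IsAcceptor A B Cm Dm E F Auio Bu By Du Dy ↔
      ((1 - Dy * Cm) * E + (Auio * Dy - By) * F = 0 ∧
      Dy * F = 0 ∧
      Auio = (1 - Dy * Cm) * A + (Auio * Dy - By) * Cm ∧
      Bu = (1 - Dy * Cm) * B - By * Dm ∧
      Du = -(Dy * Dm)) :=
  (isAcceptor_iff_forall_stepDefect_eq_zero A B Cm Dm E F Auio Bu By Du Dy).trans
    (forall_stepDefect_eq_zero_iff A B Cm Dm E F Auio Bu By Du Dy)

theorem proposition1 {n m p r : ℕ} (hn : 0 < n) (hm : 0 < m) (hp : 0 < p) (hr : 0 < r)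
    (A : Matrix (Fin n) (Fin n) ℝ) (B : Matrix (Fin n) (Fin m) ℝ)
    (Cm : Matrix (Fin p) (Fin n) ℝ) (Dm : Matrix (Fin p) (Fin m) ℝ)
    (E : Matrix (Fin n) (Fin r) ℝ) (F : Matrix (Fin p) (Fin r) ℝ)
    (hEF : (Matrix.fromRows E F).rank = r)
    (Auio : Matrix (Fin n) (Fin n) ℝ) (Bu : Matrix (Fin n) (Fin m) ℝ)
    (By : Matrix (Fin n) (Fin p) ℝ) (Du : Matrix (Fin n) (Fin m) ℝ)
    (Dy : Matrix (Fin n) (Fin p) ℝ) :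
    IsAcceptor A B Cm Dm E F Auio Bu By Du Dy ↔
      ((1 - Dy * Cm) * E + (Auio * Dy - By) * F = 0 ∧
      Dy * F = 0 ∧
      Auio = (1 - Dy * Cm) * A + (Auio * Dy - By) * Cm ∧
      Bu = (1 - Dy * Cm) * B - By * Dm ∧
      Du = -(Dy * Dm)) :=
  proposition1_general A B Cm Dm E F Auio Bu By Du Dy
end
end

section
/- (Proposition 2) Suppose the observer candidate Σ̂ is an acceptor for the system Σ. Then Σ̂ is a UIO for Σ (i.e., for every solution (x, u, y, d) of Σ and every solution (x̂, u, y, z) of Σ̂ with the same u and y, the error e(t) = x(t) − x̂(t) tends to 0 as t → ∞) if and only if A_UIO is Schur stable. -/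
open Matrix Filter

noncomputable section

/-!
Two solutions of `Σ̂` driven by the same `u` and `y` differ by `A_UIO^t (x̂(0) - x̂'(0))`.
Since `Σ̂` is an acceptor, the true state `x` is itself the output of such a solution, so the
estimation error is `A_UIO^t e(0)`; conversely, the zero solution of `Σ` tracked by the observer
state `A_UIO^t v` makes every `A_UIO^t v` an error trajectory. Hence the error always vanishes iff
`A_UIO^t → 0`, and for a matrix over `ℂ` this is equivalent to all eigenvalues lying in the open
unit disc: `μ^t ∈ σ(A^t)` gives one direction, Gelfand's formula the other.
-/

open Topology

namespace spectrum

variable {A : Type*} [NormedRing A] [NormedAlgebra ℂ A] [CompleteSpace A]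

theorem tendsto_pow_nhds_zero_of_spectralRadius_lt_one {a : A}
    (ha : spectralRadius ℂ a < 1) : Tendsto (a ^ ·) atTop (𝓝 0) := by
  obtain ⟨c, hρc, hc1⟩ := exists_between ha
  have hc : c ≠ ⊤ := ne_top_of_lt hc1
  have hbound : ∀ᶠ t : ℕ in atTop, ‖a ^ t‖ ≤ c.toReal ^ t := by
    filter_upwards [(pow_norm_pow_one_div_tendsto_nhds_spectralRadius a).eventually_lt_const hρc,
      eventually_gt_atTop 0] with t ht ht0
    have hroot := (ENNReal.ofReal_lt_iff_lt_toReal (by positivity) hc).mp ht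
    rw [one_div, Real.rpow_inv_lt_iff_of_pos (norm_nonneg _) ENNReal.toReal_nonneg
      (by exact_mod_cast ht0), Real.rpow_natCast] at hroot
    exact hroot.le
  refine squeeze_zero_norm' hbound
    (tendsto_pow_atTop_nhds_zero_of_lt_one ENNReal.toReal_nonneg ?_)
  exact ENNReal.toReal_lt_of_lt_ofReal (by simpa using hc1)

theorem norm_lt_one_of_tendsto_pow {a : A} (ha : Tendsto (a ^ ·) atTop (𝓝 0)) {μ : ℂ}
    (hμ : μ ∈ spectrum ℂ a) : ‖μ‖ < 1 := by
  have hle : ∀ t : ℕ, ‖μ‖ ^ t ≤ ‖a ^ t‖ * ‖(1 : A)‖ := fun t => by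
    simpa using subset_closedBall_norm_mul (a ^ t) (pow_mem_pow a t hμ)
  have hlim : Tendsto (fun t : ℕ => ‖a ^ t‖ * ‖(1 : A)‖) atTop (𝓝 0) := by
    simpa using (tendsto_norm_zero.comp ha).mul_const ‖(1 : A)‖
  have := squeeze_zero (fun t => by positivity) hle hlim
  simpa using tendsto_pow_atTop_nhds_zero_iff.mp this

theorem tendsto_pow_nhds_zero_iff_forall_norm_lt_one (a : A) :
    Tendsto (a ^ ·) atTop (𝓝 0) ↔ ∀ μ ∈ spectrum ℂ a, ‖μ‖ < 1 := by
  refine ⟨fun ha _ => norm_lt_one_of_tendsto_pow ha, fun h => ?_⟩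
  rcases subsingleton_or_nontrivial A with hA | hA
  · simp [Subsingleton.elim _ (0 : A)]
  · obtain ⟨μ, hμ, hρ⟩ := exists_nnnorm_eq_spectralRadius a
    refine tendsto_pow_nhds_zero_of_spectralRadius_lt_one (hρ ▸ ?_)
    exact_mod_cast h μ hμ

end spectrum

namespace Matrix

variable {ι κ α : Type*}

theorem tendsto_pow_nhds_zero_iff_forall_norm_lt_one [Fintype ι] [DecidableEq ι]
    (M : Matrix ι ι ℂ) : Tendsto (M ^ ·) atTop (𝓝 0) ↔ ∀ μ ∈ spectrum ℂ M, ‖μ‖ < 1 :=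
  -- any Banach algebra norm inducing the product topology would do here
  letI := Matrix.linftyOpNormedRing (n := ι) (α := ℂ)
  letI := Matrix.linftyOpNormedAlgebra (n := ι) (R := ℂ) (α := ℂ)
  spectrum.tendsto_pow_nhds_zero_iff_forall_norm_lt_one M

theorem tendsto_map_ofReal_nhds_zero_iff {l : Filter α} {f : α → Matrix ι κ ℝ} :
    Tendsto (fun t => (f t).map (algebraMap ℝ ℂ)) l (𝓝 0) ↔ Tendsto f l (𝓝 0) := by
  simpa [Function.comp_def] using
    ((Complex.isometry_ofReal.isEmbedding.matrix_map (m := ι) (n := κ)).tendsto_nhds_iff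
      (f := f) (l := l) (y := 0)).symm

theorem tendsto_nhds_zero_iff_forall_tendsto_mulVec {R : Type*} [Ring R] [TopologicalSpace R]
    [IsTopologicalRing R] [Fintype κ] [DecidableEq κ] {l : Filter α} {f : α → Matrix ι κ R} :
    Tendsto f l (𝓝 0) ↔ ∀ v, Tendsto (fun t => f t *ᵥ v) l (𝓝 0) := by
  refine ⟨fun h v => ?_, fun h => ?_⟩
  · simpa [Function.comp_def] using
      ((continuous_id.matrix_mulVec continuous_const).tendsto 0).comp h
  · refine tendsto_pi_nhds.mpr fun i => tendsto_pi_nhds.mpr fun j => ?_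
    simpa [mulVec_single_one] using tendsto_pi_nhds.mp (h (Pi.single j 1)) i

theorem schurStable_iff_tendsto_pow {n : ℕ} (M : Matrix (Fin n) (Fin n) ℝ) :
    SchurStable M ↔ Tendsto (M ^ ·) atTop (𝓝 0) := by
  rw [SchurStable, ← tendsto_pow_nhds_zero_iff_forall_norm_lt_one,
    ← tendsto_map_ofReal_nhds_zero_iff]
  simp only [← RingHom.mapMatrix_apply, map_pow]

end Matrix

section Observer

variable {n m p : ℕ} {Auio : Matrix (Fin n) (Fin n) ℝ} {Bu : Matrix (Fin n) (Fin m) ℝ}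
  {By : Matrix (Fin n) (Fin p) ℝ} {Du : Matrix (Fin n) (Fin m) ℝ} {Dy : Matrix (Fin n) (Fin p) ℝ}

theorem ObsSol.sub_eq_pow_mulVec {u : ℕ → Fin m → ℝ} {y : ℕ → Fin p → ℝ}
    {xh xh' z z' : ℕ → Fin n → ℝ} (h : ObsSol Auio Bu By Du Dy xh u y z)
    (h' : ObsSol Auio Bu By Du Dy xh' u y z') (t : ℕ) :
    xh t - xh' t = (Auio ^ t) *ᵥ (xh 0 - xh' 0) := by
  have hout : ∀ t, xh t - xh' t = z t - z' t := fun t => by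
    rw [(h t).2, (h' t).2]
    abel
  rw [hout, hout]
  induction t with
  | zero => simp
  | succ t ih =>
    rw [(h t).1, (h' t).1, pow_succ', ← mulVec_mulVec, ← ih, mulVec_sub]
    abel

theorem obsSol_pow_mulVec (v : Fin n → ℝ) :
    ObsSol Auio Bu By Du Dy (fun t => (Auio ^ t) *ᵥ v) 0 0 (fun t => (Auio ^ t) *ᵥ v) :=
  fun t => by simp [pow_succ', ← mulVec_mulVec]

end Observer

theorem sigmaSol_zero {n m p r : ℕ}
    (A : Matrix (Fin n) (Fin n) ℝ) (B : Matrix (Fin n) (Fin m) ℝ)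
    (Cm : Matrix (Fin p) (Fin n) ℝ) (Dm : Matrix (Fin p) (Fin m) ℝ)
    (E : Matrix (Fin n) (Fin r) ℝ) (F : Matrix (Fin p) (Fin r) ℝ) :
    SigmaSol A B Cm Dm E F 0 0 0 0 :=
  fun t => by simp

theorem proposition2_general {n m p r : ℕ}
    (A : Matrix (Fin n) (Fin n) ℝ) (B : Matrix (Fin n) (Fin m) ℝ)
    (Cm : Matrix (Fin p) (Fin n) ℝ) (Dm : Matrix (Fin p) (Fin m) ℝ)
    (E : Matrix (Fin n) (Fin r) ℝ) (F : Matrix (Fin p) (Fin r) ℝ)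
    (Auio : Matrix (Fin n) (Fin n) ℝ) (Bu : Matrix (Fin n) (Fin m) ℝ)
    (By : Matrix (Fin n) (Fin p) ℝ) (Du : Matrix (Fin n) (Fin m) ℝ)
    (Dy : Matrix (Fin n) (Fin p) ℝ)
    (hacc : IsAcceptor A B Cm Dm E F Auio Bu By Du Dy) :
    (∀ (x : ℕ → Fin n → ℝ) (u : ℕ → Fin m → ℝ) (y : ℕ → Fin p → ℝ)
      (d : ℕ → Fin r → ℝ) (xh : ℕ → Fin n → ℝ) (z : ℕ → Fin n → ℝ),
        SigmaSol A B Cm Dm E F x u y d → ObsSol Auio Bu By Du Dy xh u y z →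
        Filter.Tendsto (fun t => x t - xh t) Filter.atTop (nhds 0)) ↔
      SchurStable Auio := by
  rw [Matrix.schurStable_iff_tendsto_pow, Matrix.tendsto_nhds_zero_iff_forall_tendsto_mulVec]
  constructor
  · intro hUIO v
    simpa [mulVec_neg] using
      hUIO _ _ _ _ _ _ (sigmaSol_zero A B Cm Dm E F) (obsSol_pow_mulVec (-v))
  · intro hS x u y d xh z hsig hobs
    obtain ⟨zx, hzx⟩ := hacc x u y d hsig
    exact (hS (x 0 - xh 0)).congr fun t => (hzx.sub_eq_pow_mulVec hobs t).symm

theorem proposition2 {n m p r : ℕ} (hn : 0 < n) (hm : 0 < m) (hp : 0 < p) (hr : 0 < r)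
    (A : Matrix (Fin n) (Fin n) ℝ) (B : Matrix (Fin n) (Fin m) ℝ)
    (Cm : Matrix (Fin p) (Fin n) ℝ) (Dm : Matrix (Fin p) (Fin m) ℝ)
    (E : Matrix (Fin n) (Fin r) ℝ) (F : Matrix (Fin p) (Fin r) ℝ)
    (hEF : (Matrix.fromRows E F).rank = r)
    (Auio : Matrix (Fin n) (Fin n) ℝ) (Bu : Matrix (Fin n) (Fin m) ℝ)
    (By : Matrix (Fin n) (Fin p) ℝ) (Du : Matrix (Fin n) (Fin m) ℝ)
    (Dy : Matrix (Fin n) (Fin p) ℝ)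
    (hacc : IsAcceptor A B Cm Dm E F Auio Bu By Du Dy) :
    (∀ (x : ℕ → Fin n → ℝ) (u : ℕ → Fin m → ℝ) (y : ℕ → Fin p → ℝ)
      (d : ℕ → Fin r → ℝ) (xh : ℕ → Fin n → ℝ) (z : ℕ → Fin n → ℝ),
        SigmaSol A B Cm Dm E F x u y d → ObsSol Auio Bu By Du Dy xh u y z →
        Filter.Tendsto (fun t => x t - xh t) Filter.atTop (nhds 0)) ↔
      SchurStable Auio :=
  proposition2_general A B Cm Dm E F Auio Bu By Du Dy hacc
end
end

section
/- (Theorem 2, (iii)⇔(iv)) The following are equivalent: (iii) there exist matrices T₀, T₁ ∈ ℝ^{n×(n+p−r)} and a Schur stable matrix A_UIO ∈ ℝ^{n×n} such that the polynomial matrix identity (T₀ + z T₁) · [M_E M_F] · [zI_n − A; −C] = zI_n − A_UIO holds in ℝ[z]^{n×n}, where [zI_n − A; −C] ∈ ℝ[z]^{(n+p)×n} stacks zI_n − A over −C; (iv) there exist matrices S₀, S₁ ∈ ℝ^{n×(n+p)} and a Schur stable matrix A_UIO ∈ ℝ^{n×n} such that the polynomial matrix identity (S₀ + z S₁) · [[zI_n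 − A, −E], [−C, −F]] = [zI_n − A_UIO, 0] holds in ℝ[z]^{n×(n+r)}. -/
open Matrix Filter

noncomputable section

/-! The second block column of (iv) says that `S₀ + z S₁` annihilates `[E; F]`; comparing
coefficients of `z`, this means `S₀ [E; F] = S₁ [E; F] = 0`. Since `ker [M_E M_F]` is the column
space of `[E; F]`, a real matrix annihilates `[E; F]` exactly when it factors as `T [M_E M_F]`,
so `Sᵢ = Tᵢ [M_E M_F]` turns (iii) into (iv) and back, with the same `A_UIO`. -/

open Polynomial

namespace Matrix

section Factorization

variable {K : Type*} [Field K] {ι κ β γ : Type*} [Fintype ι] [Fintype β]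

theorem exists_mul_eq_of_ker_le (N : Matrix ι β K) (S : Matrix κ β K)
    (h : ∀ v, N *ᵥ v = 0 → S *ᵥ v = 0) : ∃ T : Matrix κ ι K, T * N = S := by
  classical
  let f := N.mulVecLin
  have hker : LinearMap.ker f ≤ LinearMap.ker S.mulVecLin := fun v hv => h v hv
  obtain ⟨g, hg⟩ := LinearMap.exists_extend
    (((LinearMap.ker f).liftQ S.mulVecLin hker).comp f.quotKerEquivRange.symm.toLinearMap)
  refine ⟨LinearMap.toMatrix' g, toLin'.injective (LinearMap.ext fun v => ?_)⟩
  have hgv := LinearMap.congr_fun hg ⟨f v, LinearMap.mem_range_self f v⟩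
  simp only [LinearMap.coe_comp, Function.comp_apply, Submodule.subtype_apply,
    LinearEquiv.coe_coe, LinearMap.quotKerEquivRange_symm_apply_image] at hgv
  simpa [toLin'_mul, f] using hgv

theorem exists_mul_eq_iff_mul_eq_zero (N : Matrix ι β K) (G : Matrix β γ K) [Fintype γ]
    (hker : ∀ v, N *ᵥ v = 0 ↔ ∃ c, v = G *ᵥ c) (S : Matrix κ β K) :
    (∃ T : Matrix κ ι K, T * N = S) ↔ S * G = 0 := by
  constructor
  · rintro ⟨T, rfl⟩
    have hNG : N * G = 0 := ext_iff_mulVec.2 fun c => by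
      rw [← mulVec_mulVec, (hker _).2 ⟨c, rfl⟩, zero_mulVec]
    rw [Matrix.mul_assoc, hNG, Matrix.mul_zero]
  · intro hSG
    refine exists_mul_eq_of_ker_le N S fun v hv => ?_
    obtain ⟨c, rfl⟩ := (hker v).1 hv
    rw [mulVec_mulVec, hSG, zero_mulVec]

end Factorization

section Pencil

variable {R : Type*} [Semiring R] {α β γ : Type*}

theorem map_C_add_X_smul_map_C_eq_zero_iff (U V : Matrix α β R) :
    U.map C + (X : R[X]) • V.map C = 0 ↔ U = 0 ∧ V = 0 := by
  refine ⟨fun h => ?_, fun ⟨hU, hV⟩ => by simp [hU, hV]⟩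
  have hij i j : C (U i j) + X * C (V i j) = 0 := by
    simpa using congrFun (congrFun h i) j
  constructor <;> ext i j
  · simpa using congrArg (coeff · 0) (hij i j)
  · simpa using congrArg (coeff · 1) (hij i j)

theorem map_C_add_X_smul_map_C_mul [Fintype β] (U V : Matrix α β R) (N : Matrix β γ R) :
    (U.map C + (X : R[X]) • V.map C) * N.map C = (U * N).map C + (X : R[X]) • (V * N).map C := by
  rw [Matrix.add_mul, Matrix.smul_mul, Matrix.map_mul, Matrix.map_mul]

end Pencil

end Matrix

theorem theorem2_iii_iff_iv_general {n p r : ℕ}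
    (A : Matrix (Fin n) (Fin n) ℝ)
    (Cm : Matrix (Fin p) (Fin n) ℝ)
    (E : Matrix (Fin n) (Fin r) ℝ) (F : Matrix (Fin p) (Fin r) ℝ)
    (ME : Matrix (Fin (n + p - r)) (Fin n) ℝ) (MF : Matrix (Fin (n + p - r)) (Fin p) ℝ)
    (hMker : ∀ v : Fin n ⊕ Fin p → ℝ,
      (Matrix.fromCols ME MF).mulVec v = 0 ↔
        ∃ c : Fin r → ℝ, v = (Matrix.fromRows E F).mulVec c) :
    (∃ (T0 T1 : Matrix (Fin n) (Fin (n + p - r)) ℝ)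
      (Auio : Matrix (Fin n) (Fin n) ℝ), SchurStable Auio ∧
      (T0.map (Polynomial.C : ℝ →+* Polynomial ℝ) +
        (Polynomial.X : Polynomial ℝ) • T1.map (Polynomial.C : ℝ →+* Polynomial ℝ)) *
        (Matrix.fromCols ME MF).map (Polynomial.C : ℝ →+* Polynomial ℝ) *
        Matrix.fromRows
          ((Polynomial.X : Polynomial ℝ) • (1 : Matrix (Fin n) (Fin n) (Polynomial ℝ)) -
            A.map (Polynomial.C : ℝ →+* Polynomial ℝ))
          (-(Cm.map (Polynomial.C : ℝ →+* Polynomial ℝ))) =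
        (Polynomial.X : Polynomial ℝ) • (1 : Matrix (Fin n) (Fin n) (Polynomial ℝ)) -
          Auio.map (Polynomial.C : ℝ →+* Polynomial ℝ)) ↔
    (∃ (S0 S1 : Matrix (Fin n) (Fin n ⊕ Fin p) ℝ)
      (Auio : Matrix (Fin n) (Fin n) ℝ), SchurStable Auio ∧
      (S0.map (Polynomial.C : ℝ →+* Polynomial ℝ) +
        (Polynomial.X : Polynomial ℝ) • S1.map (Polynomial.C : ℝ →+* Polynomial ℝ)) *
        Matrix.fromBlocks
          ((Polynomial.X : Polynomial ℝ) • (1 : Matrix (Fin n) (Fin n) (Polynomial ℝ)) -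
            A.map (Polynomial.C : ℝ →+* Polynomial ℝ))
          (-(E.map (Polynomial.C : ℝ →+* Polynomial ℝ)))
          (-(Cm.map (Polynomial.C : ℝ →+* Polynomial ℝ)))
          (-(F.map (Polynomial.C : ℝ →+* Polynomial ℝ))) =
        Matrix.fromCols
          ((Polynomial.X : Polynomial ℝ) • (1 : Matrix (Fin n) (Fin n) (Polynomial ℝ)) -
            Auio.map (Polynomial.C : ℝ →+* Polynomial ℝ))
          (0 : Matrix (Fin n) (Fin r) (Polynomial ℝ))) := by
  have hfactor := exists_mul_eq_iff_mul_eq_zero (κ := Fin n) (fromCols ME MF) (fromRows E F) hMker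
  rw [← fromCols_fromRows_eq_fromBlocks, ← fromRows_neg, ← fromRows_map]
  simp only [mul_fromCols (R := ℝ[X]), fromCols_ext_iff, Matrix.mul_neg, neg_eq_zero,
    map_C_add_X_smul_map_C_mul, map_C_add_X_smul_map_C_eq_zero_iff]
  constructor
  · rintro ⟨T0, T1, Auio, hA, h⟩
    exact ⟨_, _, Auio, hA, h, (hfactor _).1 ⟨T0, rfl⟩, (hfactor _).1 ⟨T1, rfl⟩⟩
  · rintro ⟨S0, S1, Auio, hA, h, hS0, hS1⟩
    obtain ⟨T0, rfl⟩ := (hfactor S0).2 hS0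
    obtain ⟨T1, rfl⟩ := (hfactor S1).2 hS1
    exact ⟨T0, T1, Auio, hA, h⟩

theorem theorem2_iii_iff_iv {n m p r : ℕ} (hn : 0 < n) (hm : 0 < m) (hp : 0 < p) (hr : 0 < r)
    (A : Matrix (Fin n) (Fin n) ℝ) (B : Matrix (Fin n) (Fin m) ℝ)
    (Cm : Matrix (Fin p) (Fin n) ℝ) (Dm : Matrix (Fin p) (Fin m) ℝ)
    (E : Matrix (Fin n) (Fin r) ℝ) (F : Matrix (Fin p) (Fin r) ℝ)
    (hEF : (Matrix.fromRows E F).rank = r)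
    (ME : Matrix (Fin (n + p - r)) (Fin n) ℝ) (MF : Matrix (Fin (n + p - r)) (Fin p) ℝ)
    (hMrank : (Matrix.fromCols ME MF).rank = n + p - r)
    (hMker : ∀ v : Fin n ⊕ Fin p → ℝ,
      (Matrix.fromCols ME MF).mulVec v = 0 ↔
        ∃ c : Fin r → ℝ, v = (Matrix.fromRows E F).mulVec c) :
    (∃ (T0 T1 : Matrix (Fin n) (Fin (n + p - r)) ℝ)
      (Auio : Matrix (Fin n) (Fin n) ℝ), SchurStable Auio ∧
      (T0.map (Polynomial.C : ℝ →+* Polynomial ℝ) +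
        (Polynomial.X : Polynomial ℝ) • T1.map (Polynomial.C : ℝ →+* Polynomial ℝ)) *
        (Matrix.fromCols ME MF).map (Polynomial.C : ℝ →+* Polynomial ℝ) *
        Matrix.fromRows
          ((Polynomial.X : Polynomial ℝ) • (1 : Matrix (Fin n) (Fin n) (Polynomial ℝ)) -
            A.map (Polynomial.C : ℝ →+* Polynomial ℝ))
          (-(Cm.map (Polynomial.C : ℝ →+* Polynomial ℝ))) =
        (Polynomial.X : Polynomial ℝ) • (1 : Matrix (Fin n) (Fin n) (Polynomial ℝ)) -
          Auio.map (Polynomial.C : ℝ →+* Polynomial ℝ)) ↔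
    (∃ (S0 S1 : Matrix (Fin n) (Fin n ⊕ Fin p) ℝ)
      (Auio : Matrix (Fin n) (Fin n) ℝ), SchurStable Auio ∧
      (S0.map (Polynomial.C : ℝ →+* Polynomial ℝ) +
        (Polynomial.X : Polynomial ℝ) • S1.map (Polynomial.C : ℝ →+* Polynomial ℝ)) *
        Matrix.fromBlocks
          ((Polynomial.X : Polynomial ℝ) • (1 : Matrix (Fin n) (Fin n) (Polynomial ℝ)) -
            A.map (Polynomial.C : ℝ →+* Polynomial ℝ))
          (-(E.map (Polynomial.C : ℝ →+* Polynomial ℝ)))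
          (-(Cm.map (Polynomial.C : ℝ →+* Polynomial ℝ)))
          (-(F.map (Polynomial.C : ℝ →+* Polynomial ℝ))) =
        Matrix.fromCols
          ((Polynomial.X : Polynomial ℝ) • (1 : Matrix (Fin n) (Fin n) (Polynomial ℝ)) -
            Auio.map (Polynomial.C : ℝ →+* Polynomial ℝ))
          (0 : Matrix (Fin n) (Fin r) (Polynomial ℝ))) :=
  theorem2_iii_iff_iv_general A Cm E F ME MF hMker
end
end

section
/- (Proposition 3) Suppose the historical data are generated by Σ and satisfy the Assumption. Then a triple of sequences (x, u, y) with values in ℝⁿ, ℝᵐ, ℝᵖ satisfies the compatibility condition — for every t ∈ ℕ the stacked vector (x(t), x(t+1), u(t), u(t+1), y(t), y(t+1)) ∈ ℝ^{2(n+m+p)} lies in the column space of Φ_d — if and only if there exists a sequence d with values in ℝʳ such that (x, u, y, d) is a solution of Σ. -/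
open Matrix Filter

noncomputable section

/-!
Every column of `Φ_d` is a sample `(x(t), x(t+1), u(t), u(t+1), y(t), y(t+1))` of a solution
of `Σ`, so by linearity every vector in its column space is the sample of a "combined" data
trajectory that satisfies the equations of `Σ` with the combined disturbance. This gives the
disturbance `d` in one direction. Conversely, the Assumption says that `(x(t), u(t), u(t+1),
d(t), d(t+1))` can be matched exactly by a combination of the data; the equations of `Σ` then
force the remaining entries `x(t+1), y(t), y(t+1)` of the sample to match as well.
-/

theorem Matrix.mulVec_surjective_of_rank_eq_card {K m n : Type*} [Field K] [Fintype m]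
    [Fintype n] (M : Matrix m n K) (hM : M.rank = Fintype.card m) :
    Function.Surjective M.mulVec := by
  have hrange : LinearMap.range M.mulVecLin = ⊤ :=
    Submodule.eq_top_of_finrank_eq (by rw [← Matrix.rank, hM, Module.finrank_fintype_fun_eq_card])
  exact fun w ↦ LinearMap.range_eq_top.mp hrange w

theorem sum_smul_eq_mulVec_add_mulVec_add_mulVec {K ι α β γ δ : Type*} [CommSemiring K]
    [Fintype ι] [Fintype β] [Fintype γ] [Fintype δ]
    (P : Matrix α β K) (Q : Matrix α γ K) (R : Matrix α δ K)
    {v : ι → α → K} {a : ι → β → K} {b : ι → γ → K} {e : ι → δ → K}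
    (h : ∀ j, v j = P *ᵥ a j + Q *ᵥ b j + R *ᵥ e j) (c : ι → K) :
    ∑ j, c j • v j = P *ᵥ ∑ j, c j • a j + Q *ᵥ ∑ j, c j • b j + R *ᵥ ∑ j, c j • e j := by
  simp only [h, mulVec_sum, mulVec_smul, smul_add, Finset.sum_add_distrib]

/-- `dataComb c w 0` and `dataComb c w 1` are the paper's `W_p c` and `W_f c`. -/
def dataComb {V : Type*} [AddCommMonoid V] [Module ℝ V] {k : ℕ} (c : Fin k → ℝ) (w : ℕ → V)
    (s : ℕ) : V :=
  ∑ j, c j • w (j + s)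

section DataMatrices

variable {n m p r : ℕ} {T : ℕ} (xd : ℕ → Fin n → ℝ) (ud : ℕ → Fin m → ℝ) (yd : ℕ → Fin p → ℝ)
  (dd : ℕ → Fin r → ℝ) (c : Fin (T - 1) → ℝ)

theorem stackVec_eq_elim (x : ℕ → Fin n → ℝ) (u : ℕ → Fin m → ℝ) (y : ℕ → Fin p → ℝ) (t : ℕ) :
    stackVec x u y t = Sum.elim (Sum.elim (x t) (x (t + 1)))
      (Sum.elim (Sum.elim (u t) (u (t + 1))) (Sum.elim (y t) (y (t + 1)))) := by
  ext ((a | a) | (a | a) | (a | a)) <;> rfl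

theorem PhiD_mulVec :
    PhiD T xd ud yd *ᵥ c = stackVec (dataComb c xd) (dataComb c ud) (dataComb c yd) 0 := by
  ext ((a | a) | (a | a) | (a | a)) <;>
    simp [PhiD, stackVec, dataComb, mulVec, dotProduct, Finset.sum_apply, mul_comm]

theorem HistMat_mulVec :
    HistMat T xd ud dd *ᵥ c = Sum.elim (dataComb c xd 0)
      (Sum.elim (Sum.elim (dataComb c ud 0) (dataComb c ud 1))
        (Sum.elim (dataComb c dd 0) (dataComb c dd 1))) := by
  ext (a | (a | a) | (a | a)) <;>
    simp [HistMat, dataComb, mulVec, dotProduct, Finset.sum_apply, mul_comm]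

theorem exists_dataComb_eq (hrank : (HistMat T xd ud dd).rank = n + ((m + m) + (r + r)))
    (x₀ : Fin n → ℝ) (u₀ u₁ : Fin m → ℝ) (d₀ d₁ : Fin r → ℝ) :
    ∃ c : Fin (T - 1) → ℝ, dataComb c xd 0 = x₀ ∧ dataComb c ud 0 = u₀ ∧
      dataComb c ud 1 = u₁ ∧ dataComb c dd 0 = d₀ ∧ dataComb c dd 1 = d₁ := by
  obtain ⟨c, hc⟩ := (HistMat T xd ud dd).mulVec_surjective_of_rank_eq_card (by simp [hrank])
    (Sum.elim x₀ (Sum.elim (Sum.elim u₀ u₁) (Sum.elim d₀ d₁)))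
  simp only [HistMat_mulVec, Sum.elim_eq_iff] at hc
  exact ⟨c, hc.1, hc.2.1.1, hc.2.1.2, hc.2.2.1, hc.2.2.2⟩

variable {xd ud yd dd}

theorem dataComb_state_eq (A : Matrix (Fin n) (Fin n) ℝ) (B : Matrix (Fin n) (Fin m) ℝ)
    (E : Matrix (Fin n) (Fin r) ℝ)
    (hgen : ∀ t : ℕ, t + 2 ≤ T → xd (t + 1) = A *ᵥ xd t + B *ᵥ ud t + E *ᵥ dd t) :
    dataComb c xd 1 = A *ᵥ dataComb c xd 0 + B *ᵥ dataComb c ud 0 + E *ᵥ dataComb c dd 0 := by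
  simp only [dataComb, add_zero]
  exact sum_smul_eq_mulVec_add_mulVec_add_mulVec A B E
    (fun j : Fin (T - 1) ↦ hgen j (by have := j.isLt; omega)) c

theorem dataComb_output_eq (Cm : Matrix (Fin p) (Fin n) ℝ) (Dm : Matrix (Fin p) (Fin m) ℝ)
    (F : Matrix (Fin p) (Fin r) ℝ)
    (hgen : ∀ t : ℕ, t + 1 ≤ T → yd t = Cm *ᵥ xd t + Dm *ᵥ ud t + F *ᵥ dd t)
    {s : ℕ} (hs : s ≤ 1) :
    dataComb c yd s = Cm *ᵥ dataComb c xd s + Dm *ᵥ dataComb c ud s + F *ᵥ dataComb c dd s :=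
  sum_smul_eq_mulVec_add_mulVec_add_mulVec Cm Dm F
    (fun j : Fin (T - 1) ↦ hgen (j + s) (by have := j.isLt; omega)) c

end DataMatrices

theorem proposition3_general {n m p r : ℕ}
    (A : Matrix (Fin n) (Fin n) ℝ) (B : Matrix (Fin n) (Fin m) ℝ)
    (Cm : Matrix (Fin p) (Fin n) ℝ) (Dm : Matrix (Fin p) (Fin m) ℝ)
    (E : Matrix (Fin n) (Fin r) ℝ) (F : Matrix (Fin p) (Fin r) ℝ)
    (T : ℕ)
    (xd : ℕ → Fin n → ℝ) (ud : ℕ → Fin m → ℝ) (yd : ℕ → Fin p → ℝ)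
    (dd : ℕ → Fin r → ℝ)
    (hgen1 : ∀ t : ℕ, t + 2 ≤ T →
      xd (t + 1) = A.mulVec (xd t) + B.mulVec (ud t) + E.mulVec (dd t))
    (hgen2 : ∀ t : ℕ, t + 1 ≤ T →
      yd t = Cm.mulVec (xd t) + Dm.mulVec (ud t) + F.mulVec (dd t))
    (hassump : (HistMat T xd ud dd).rank = n + ((m + m) + (r + r)))
    (x : ℕ → Fin n → ℝ) (u : ℕ → Fin m → ℝ) (y : ℕ → Fin p → ℝ) :
    (∀ t : ℕ, ∃ c : Fin (T - 1) → ℝ,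
      stackVec x u y t = (PhiD T xd ud yd).mulVec c) ↔
      ∃ d : ℕ → Fin r → ℝ, SigmaSol A B Cm Dm E F x u y d := by
  constructor
  · intro hcol
    choose c hc using hcol
    simp only [PhiD_mulVec, stackVec_eq_elim, zero_add, Sum.elim_eq_iff] at hc
    refine ⟨fun t ↦ dataComb (c t) dd 0, fun t ↦ ⟨?_, ?_⟩⟩
    · rw [(hc t).1.2, (hc t).1.1, (hc t).2.1.1, dataComb_state_eq _ A B E hgen1]
    · rw [(hc t).2.2.1, (hc t).1.1, (hc t).2.1.1, dataComb_output_eq _ Cm Dm F hgen2 zero_le_one]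
  · rintro ⟨d, hd⟩ t
    obtain ⟨c, hx, hu, hu', hdt, hdt'⟩ :=
      exists_dataComb_eq xd ud dd hassump (x t) (u t) (u (t + 1)) (d t) (d (t + 1))
    have hx' : dataComb c xd 1 = x (t + 1) := by
      rw [dataComb_state_eq c A B E hgen1, hx, hu, hdt, (hd t).1]
    have hy : dataComb c yd 0 = y t := by
      rw [dataComb_output_eq c Cm Dm F hgen2 zero_le_one, hx, hu, hdt, (hd t).2]
    have hy' : dataComb c yd 1 = y (t + 1) := by
      rw [dataComb_output_eq c Cm Dm F hgen2 le_rfl, hx', hu', hdt', (hd (t + 1)).2]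
    refine ⟨c, ?_⟩
    rw [PhiD_mulVec, stackVec_eq_elim, stackVec_eq_elim, zero_add, hx, hx', hu, hu', hy, hy']

theorem proposition3 {n m p r : ℕ} (hn : 0 < n) (hm : 0 < m) (hp : 0 < p) (hr : 0 < r)
    (A : Matrix (Fin n) (Fin n) ℝ) (B : Matrix (Fin n) (Fin m) ℝ)
    (Cm : Matrix (Fin p) (Fin n) ℝ) (Dm : Matrix (Fin p) (Fin m) ℝ)
    (E : Matrix (Fin n) (Fin r) ℝ) (F : Matrix (Fin p) (Fin r) ℝ)
    (hEF : (Matrix.fromRows E F).rank = r)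
    (T : ℕ) (hT : 2 ≤ T)
    (xd : ℕ → Fin n → ℝ) (ud : ℕ → Fin m → ℝ) (yd : ℕ → Fin p → ℝ)
    (dd : ℕ → Fin r → ℝ)
    (hgen1 : ∀ t : ℕ, t + 2 ≤ T →
      xd (t + 1) = A.mulVec (xd t) + B.mulVec (ud t) + E.mulVec (dd t))
    (hgen2 : ∀ t : ℕ, t + 1 ≤ T →
      yd t = Cm.mulVec (xd t) + Dm.mulVec (ud t) + F.mulVec (dd t))
    (hassump : (HistMat T xd ud dd).rank = n + ((m + m) + (r + r)))
    (x : ℕ → Fin n → ℝ) (u : ℕ → Fin m → ℝ) (y : ℕ → Fin p → ℝ) :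
    (∀ t : ℕ, ∃ c : Fin (T - 1) → ℝ,
      stackVec x u y t = (PhiD T xd ud yd).mulVec c) ↔
      ∃ d : ℕ → Fin r → ℝ, SigmaSol A B Cm Dm E F x u y d :=
  proposition3_general A B Cm Dm E F T xd ud yd dd hgen1 hgen2 hassump x u y
end
end

section
/- (Theorem 3) Suppose the historical data are generated by Σ and satisfy the Assumption. Then there exists an observer candidate Σ̂ that is a UIO for Σ if and only if for every integer q and every matrix Ψ = [V_p V_f W_p W_f R_p R_f] ∈ ℝ^{q×2(n+m+p)} (with blocks V_p, V_f ∈ ℝ^{q×n}, W_p, W_f ∈ ℝ^{q×m}, R_p, R_f ∈ ℝ^{q×p}) whose kernel equals the column space of Φ_d, there exist a matrix Ω ∈ ℝ^{n×q} and a Schur stable matrix A* ∈ ℝ^{n×n} such that Ω V_p = −A* and Ω V_f = I_n. -/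
open Matrix Filter

noncomputable section

/-!
Both sides say that every trajectory of `Σ` obeys a recursion
`x(t+1) = A* x(t) + P₁ u(t) + P₂ u(t+1) + Q₁ y(t) + Q₂ y(t+1)` with `A*` Schur stable, i.e. that
the row block `[-A*, I, -P₁, -P₂, -Q₁, -Q₂]` annihilates every window
`(x(t), x(t+1), u(t), u(t+1), y(t), y(t+1))`. An acceptor yields such a recursion with
`A* = A_UIO` (Schur stable when the acceptor is a UIO), and conversely such a recursion defines a
UIO whose error obeys `e(t+1) = A* e(t)`.

A window is the image under a fixed matrix `Γ` of `(x(t), u(t), u(t+1), d(t), d(t+1))`, and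
`Φ_d = Γ [X_p; U_p; U_f; D_p; D_f]`. By the Assumption the second factor is onto, so the windows
of `Σ` span exactly the column space of `Φ_d`, which is `ker Ψ`. A row block kills `ker Ψ` iff it
equals `Ω Ψ` for some `Ω`, and comparing the state blocks gives `Ω V_p = -A*`, `Ω V_f = I`.
-/

theorem SchurStable.of_tendsto_pow {n : ℕ} {M : Matrix (Fin n) (Fin n) ℝ}
    (h : Tendsto (M ^ ·) atTop (nhds 0)) : SchurStable M := by
  intro μ hμ
  rw [← Matrix.spectrum_toLin', ← Module.End.hasEigenvalue_iff_mem_spectrum] at hμ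
  obtain ⟨w, hw⟩ := hμ.exists_hasEigenvector
  have hpow (t : ℕ) : (M ^ t).map (algebraMap ℝ ℂ) *ᵥ w = μ ^ t • w := by
    calc (M ^ t).map (algebraMap ℝ ℂ) *ᵥ w
        = Matrix.toLinAlgEquiv' (M.map (algebraMap ℝ ℂ) ^ t) w := by
          rw [← RingHom.mapMatrix_apply, map_pow]; rfl
      _ = (Matrix.toLin' (M.map (algebraMap ℝ ℂ)) ^ t) w := by rw [map_pow]; rfl
      _ = μ ^ t • w := hw.pow_apply t
  have hlim : Tendsto (fun t => μ ^ t • w) atTop (nhds 0) := by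
    have := (((continuous_id.matrix_map Complex.continuous_ofReal).matrix_mulVec
      (continuous_const (y := w))).tendsto 0).comp h
    exact Tendsto.congr hpow (by simpa [Function.comp_def] using this)
  obtain ⟨j, hj⟩ := Function.ne_iff.1 hw.2
  have hj' : Tendsto (fun t => μ ^ t * w j) atTop (nhds 0) := by
    simpa [Function.comp_def] using ((continuous_apply j).tendsto _).comp hlim
  have : Tendsto (fun t => μ ^ t) atTop (nhds 0) := by
    simpa [mul_assoc, mul_inv_cancel₀ hj] using hj'.mul_const (w j)⁻¹
  exact tendsto_pow_atTop_nhds_zero_iff_norm_lt_one.1 this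

theorem SchurStable.tendsto_pow {n : ℕ} {M : Matrix (Fin n) (Fin n) ℝ} (h : SchurStable M) :
    Tendsto (M ^ ·) atTop (nhds 0) := by
  rcases isEmpty_or_nonempty (Fin n) with _ | _
  · exact tendsto_const_nhds.congr fun _ => Subsingleton.elim _ _
  let _ : NormedRing (Matrix (Fin n) (Fin n) ℂ) := Matrix.linftyOpNormedRing
  let _ : NormedAlgebra ℂ (Matrix (Fin n) (Fin n) ℂ) := Matrix.linftyOpNormedAlgebra
  have : CompleteSpace (Matrix (Fin n) (Fin n) ℂ) := FiniteDimensional.complete ℂ _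
  set Mc := M.map (algebraMap ℝ ℂ)
  have hρ : spectralRadius ℂ Mc < 1 := by
    simpa using spectrum.spectralRadius_lt_of_forall_lt Mc (r := 1) fun z hz => by
      exact_mod_cast h z hz
  obtain ⟨c, hρc, hc1⟩ := ENNReal.lt_iff_exists_nnreal_btwn.1 hρ
  have hgelfand :=
    (spectrum.pow_nnnorm_pow_one_div_tendsto_nhds_spectralRadius Mc).eventually_lt_const hρc
  have hbound : ∀ᶠ k : ℕ in atTop, ‖Mc ^ k‖ ≤ (c : ℝ) ^ k := by
    filter_upwards [hgelfand, eventually_ge_atTop 1] with k hk hk1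
    have hk0 : (k : ℝ) ≠ 0 := by positivity
    have := ENNReal.rpow_lt_rpow hk (by positivity : (0:ℝ) < k)
    rw [← ENNReal.rpow_mul, one_div_mul_cancel hk0, ENNReal.rpow_one,
      ENNReal.rpow_natCast, ← ENNReal.coe_pow, ENNReal.coe_lt_coe] at this
    exact_mod_cast this.le
  have hMc : Tendsto (Mc ^ ·) atTop (nhds 0) :=
    squeeze_zero_norm' hbound (tendsto_pow_atTop_nhds_zero_of_lt_one c.2 (by exact_mod_cast hc1))
  have hre := ((continuous_id.matrix_map Complex.continuous_re).tendsto 0).comp hMc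
  have hM (k : ℕ) : (Mc ^ k).map Complex.re = M ^ k := by
    simp only [Mc]
    rw [← RingHom.mapMatrix_apply, ← map_pow, RingHom.mapMatrix_apply, Matrix.map_map]
    exact Matrix.map_id' _
  simpa [Function.comp_def, hM] using hre

section LinearAlgebra

variable {K : Type*} [Field K] {ι κ μ : Type*} [Fintype κ]

theorem Matrix.exists_mul_eq_of_ker_le_s9 [Fintype ι] [DecidableEq ι] (Ψ : Matrix ι κ K)
    (G : Matrix μ κ K) (h : ∀ v, Ψ *ᵥ v = 0 → G *ᵥ v = 0) : ∃ Ω : Matrix μ ι K, Ω * Ψ = G := by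
  set P := LinearMap.ker Ψ.mulVecLin
  obtain ⟨g, hg⟩ := LinearMap.exists_leftInverse_of_injective (P.liftQ Ψ.mulVecLin le_rfl)
    (P.ker_liftQ_eq_bot _ _ le_rfl)
  set G' := P.liftQ G.mulVecLin fun v hv => h v hv
  refine ⟨LinearMap.toMatrix' (G' ∘ₗ g), Matrix.ext_iff_mulVec.2 fun v => ?_⟩
  have hv : g (Ψ *ᵥ v) = P.mkQ v := LinearMap.congr_fun hg (P.mkQ v)
  rw [← Matrix.mulVec_mulVec, LinearMap.toMatrix'_mulVec, LinearMap.comp_apply, hv]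
  rfl

theorem Submodule.exists_matrix_ker_eq [DecidableEq κ] (U : Submodule K (κ → K)) :
    ∃ (q : ℕ) (Ψ : Matrix (Fin q) κ K), ∀ v, Ψ *ᵥ v = 0 ↔ v ∈ U := by
  set f := (Module.finBasis K ((κ → K) ⧸ U)).equivFun.toLinearMap ∘ₗ U.mkQ
  refine ⟨_, LinearMap.toMatrix' f, fun v => ?_⟩
  rw [LinearMap.toMatrix'_mulVec, ← LinearMap.mem_ker, LinearMap.ker_comp,
    LinearEquiv.ker, Submodule.comap_bot, Submodule.ker_mkQ]

theorem Matrix.exists_mul_eq_one_of_rank_eq_card [Fintype μ] [DecidableEq μ]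
    {H : Matrix μ κ K} (h : H.rank = Fintype.card μ) : ∃ H' : Matrix κ μ K, H * H' = 1 := by
  refine Matrix.mulVec_surjective_iff_exists_right_inverse.1 fun w => ?_
  have hrange : LinearMap.range H.mulVecLin = ⊤ := by
    apply Submodule.eq_top_of_finrank_eq
    rw [← Matrix.rank, h, Module.finrank_fintype_fun_eq_card]
  exact LinearMap.mem_range.1 (hrange ▸ Submodule.mem_top)

end LinearAlgebra

abbrev HistIdx (n m r : ℕ) := Fin n ⊕ ((Fin m ⊕ Fin m) ⊕ (Fin r ⊕ Fin r))

section Trajectories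

variable {n m p r : ℕ} {A : Matrix (Fin n) (Fin n) ℝ} {B : Matrix (Fin n) (Fin m) ℝ}
  {Cm : Matrix (Fin p) (Fin n) ℝ} {Dm : Matrix (Fin p) (Fin m) ℝ}
  {E : Matrix (Fin n) (Fin r) ℝ} {F : Matrix (Fin p) (Fin r) ℝ}
  {x : ℕ → Fin n → ℝ} {u : ℕ → Fin m → ℝ} {y : ℕ → Fin p → ℝ} {d : ℕ → Fin r → ℝ}

def histVec (x : ℕ → Fin n → ℝ) (u : ℕ → Fin m → ℝ) (d : ℕ → Fin r → ℝ) (t : ℕ) :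
    HistIdx n m r → ℝ :=
  Sum.elim (x t) (Sum.elim (Sum.elim (u t) (u (t + 1))) (Sum.elim (d t) (d (t + 1))))

theorem stackVec_eq_sumElim (t : ℕ) :
    stackVec x u y t = Sum.elim (Sum.elim (x t) (x (t + 1)))
      (Sum.elim (Sum.elim (u t) (u (t + 1))) (Sum.elim (y t) (y (t + 1)))) := by
  funext i
  rcases i with (_ | _) | ((_ | _) | (_ | _)) <;> rfl

theorem PhiD_apply (T : ℕ) (i : RowIdx n m p) (j : Fin (T - 1)) :
    PhiD T x u y i j = stackVec x u y j i := by
  rcases i with (_ | _) | ((_ | _) | (_ | _)) <;> rfl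

theorem HistMat_apply (T : ℕ) (i : HistIdx n m r) (j : Fin (T - 1)) :
    HistMat T x u d i j = histVec x u d j i := by
  rcases i with _ | ((_ | _) | (_ | _)) <;> rfl

variable (A B Cm Dm E F) in
def stepMatrix : Matrix (RowIdx n m p) (HistIdx n m r) ℝ :=
  fromRows
    (fromRows (fromCols 1 0) (fromCols A (fromCols (fromCols B 0) (fromCols E 0))))
    (fromRows
      (fromRows (fromCols 0 (fromCols (fromCols 1 0) 0)) (fromCols 0 (fromCols (fromCols 0 1) 0)))
      (fromRows (fromCols Cm (fromCols (fromCols Dm 0) (fromCols F 0)))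
        (fromCols (Cm * A) (fromCols (fromCols (Cm * B) Dm) (fromCols (Cm * E) F)))))

theorem stackVec_eq_stepMatrix_mulVec {t : ℕ}
    (hx : x (t + 1) = A *ᵥ x t + B *ᵥ u t + E *ᵥ d t)
    (hy : y t = Cm *ᵥ x t + Dm *ᵥ u t + F *ᵥ d t)
    (hy' : y (t + 1) = Cm *ᵥ x (t + 1) + Dm *ᵥ u (t + 1) + F *ᵥ d (t + 1)) :
    stackVec x u y t = stepMatrix A B Cm Dm E F *ᵥ histVec x u d t := by
  rw [stackVec_eq_sumElim, hy', hy, hx]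
  simp only [stepMatrix, histVec, fromRows_mulVec, fromCols_mulVec_sumElim, one_mulVec,
    zero_mulVec, add_zero, zero_add, mulVec_add, ← mulVec_mulVec, add_assoc]
  rw [add_left_comm (Dm *ᵥ u (t + 1))]

theorem SigmaSol.stackVec_eq (h : SigmaSol A B Cm Dm E F x u y d) (t : ℕ) :
    stackVec x u y t = stepMatrix A B Cm Dm E F *ᵥ histVec x u d t :=
  stackVec_eq_stepMatrix_mulVec (h t).1 (h t).2 (h (t + 1)).2

theorem PhiD_eq_stepMatrix_mul_HistMat {T : ℕ} {xd : ℕ → Fin n → ℝ} {ud : ℕ → Fin m → ℝ}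
    {yd : ℕ → Fin p → ℝ} {dd : ℕ → Fin r → ℝ}
    (hgen1 : ∀ t : ℕ, t + 2 ≤ T →
      xd (t + 1) = A.mulVec (xd t) + B.mulVec (ud t) + E.mulVec (dd t))
    (hgen2 : ∀ t : ℕ, t + 1 ≤ T →
      yd t = Cm.mulVec (xd t) + Dm.mulVec (ud t) + F.mulVec (dd t)) :
    PhiD T xd ud yd = stepMatrix A B Cm Dm E F * HistMat T xd ud dd := by
  ext i j
  have hj : j.1 + 2 ≤ T := by omega
  rw [PhiD_apply, stackVec_eq_stepMatrix_mulVec (hgen1 j hj) (hgen2 j (by omega))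
    (hgen2 (j + 1) hj)]
  simp only [Matrix.mulVec, dotProduct, Matrix.mul_apply, HistMat_apply]

variable (A B Cm Dm E F) in
theorem exists_sigmaSol_histVec_eq (w : HistIdx n m r → ℝ) :
    ∃ x u y d, SigmaSol A B Cm Dm E F x u y d ∧ histVec x u d 0 = w := by
  let u : ℕ → Fin m → ℝ := fun t =>
    if t = 0 then w ∘ Sum.inr ∘ Sum.inl ∘ Sum.inl else w ∘ Sum.inr ∘ Sum.inl ∘ Sum.inr
  let d : ℕ → Fin r → ℝ := fun t =>
    if t = 0 then w ∘ Sum.inr ∘ Sum.inr ∘ Sum.inl else w ∘ Sum.inr ∘ Sum.inr ∘ Sum.inr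
  let x : ℕ → Fin n → ℝ := fun t =>
    Nat.rec (w ∘ Sum.inl) (fun s xs => A *ᵥ xs + B *ᵥ u s + E *ᵥ d s) t
  refine ⟨x, u, fun t => Cm *ᵥ x t + Dm *ᵥ u t + F *ᵥ d t, d, fun t => ⟨rfl, rfl⟩, ?_⟩
  funext i
  rcases i with _ | ((_ | _) | (_ | _)) <;> rfl
theorem mul_stepMatrix_eq_zero_of_mul_PhiD_eq_zero {ι : Type*} {T : ℕ} {xd : ℕ → Fin n → ℝ}
    {ud : ℕ → Fin m → ℝ} {yd : ℕ → Fin p → ℝ} {dd : ℕ → Fin r → ℝ}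
    (hgen1 : ∀ t : ℕ, t + 2 ≤ T →
      xd (t + 1) = A.mulVec (xd t) + B.mulVec (ud t) + E.mulVec (dd t))
    (hgen2 : ∀ t : ℕ, t + 1 ≤ T →
      yd t = Cm.mulVec (xd t) + Dm.mulVec (ud t) + F.mulVec (dd t))
    (hassump : (HistMat T xd ud dd).rank = n + ((m + m) + (r + r)))
    {G : Matrix ι (RowIdx n m p) ℝ} (h : G * PhiD T xd ud yd = 0) :
    G * stepMatrix A B Cm Dm E F = 0 := by
  obtain ⟨H', hH'⟩ := Matrix.exists_mul_eq_one_of_rank_eq_card (H := HistMat T xd ud dd)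
    (by simpa using hassump)
  calc G * stepMatrix A B Cm Dm E F
      = G * stepMatrix A B Cm Dm E F * (HistMat T xd ud dd * H') := by rw [hH', Matrix.mul_one]
    _ = G * PhiD T xd ud yd * H' := by
      rw [PhiD_eq_stepMatrix_mul_HistMat hgen1 hgen2, Matrix.mul_assoc, Matrix.mul_assoc,
        Matrix.mul_assoc]
    _ = 0 := by rw [h, Matrix.zero_mul]

end Trajectories

theorem Matrix.tendsto_zero_of_forall_tendsto_mulVec {α R : Type*} {m n : Type*} [Fintype n]
    [DecidableEq n] [Semiring R] [TopologicalSpace R] {l : Filter α} {f : α → Matrix m n R}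
    (h : ∀ v, Tendsto (fun a => f a *ᵥ v) l (nhds 0)) : Tendsto f l (nhds 0) := by
  refine tendsto_pi_nhds.2 fun i => tendsto_pi_nhds.2 fun j => ?_
  simpa [Matrix.mulVec_single_one] using tendsto_pi_nhds.1 (h (Pi.single j 1)) i

section Observers

variable {n m p r : ℕ} {A : Matrix (Fin n) (Fin n) ℝ} {B : Matrix (Fin n) (Fin m) ℝ}
  {Cm : Matrix (Fin p) (Fin n) ℝ} {Dm : Matrix (Fin p) (Fin m) ℝ}
  {E : Matrix (Fin n) (Fin r) ℝ} {F : Matrix (Fin p) (Fin r) ℝ}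
  {Auio : Matrix (Fin n) (Fin n) ℝ} {Bu : Matrix (Fin n) (Fin m) ℝ}
  {By : Matrix (Fin n) (Fin p) ℝ} {Du : Matrix (Fin n) (Fin m) ℝ} {Dy : Matrix (Fin n) (Fin p) ℝ}
  {Astar : Matrix (Fin n) (Fin n) ℝ} {P₁ P₂ : Matrix (Fin n) (Fin m) ℝ}
  {Q₁ Q₂ : Matrix (Fin n) (Fin p) ℝ}

def residualMatrix (Astar : Matrix (Fin n) (Fin n) ℝ) (P₁ P₂ : Matrix (Fin n) (Fin m) ℝ)
    (Q₁ Q₂ : Matrix (Fin n) (Fin p) ℝ) : Matrix (Fin n) (RowIdx n m p) ℝ :=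
  fromCols (fromCols (-Astar) 1) (fromCols (fromCols (-P₁) (-P₂)) (fromCols (-Q₁) (-Q₂)))

theorem residualMatrix_mulVec_stackVec (x : ℕ → Fin n → ℝ) (u : ℕ → Fin m → ℝ)
    (y : ℕ → Fin p → ℝ) (t : ℕ) :
    residualMatrix Astar P₁ P₂ Q₁ Q₂ *ᵥ stackVec x u y t =
      x (t + 1) - (Astar *ᵥ x t + P₁ *ᵥ u t + P₂ *ᵥ u (t + 1) + Q₁ *ᵥ y t + Q₂ *ᵥ y (t + 1)) := by
  rw [stackVec_eq_sumElim]
  simp only [residualMatrix, fromCols_mulVec_sumElim, neg_mulVec, one_mulVec]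
  abel

theorem eq_residualMatrix {G : Matrix (Fin n) (RowIdx n m p) ℝ}
    (hxp : G.toCols₁.toCols₁ = -Astar) (hxf : G.toCols₁.toCols₂ = 1) :
    G = residualMatrix Astar (-G.toCols₂.toCols₁.toCols₁) (-G.toCols₂.toCols₁.toCols₂)
      (-G.toCols₂.toCols₂.toCols₁) (-G.toCols₂.toCols₂.toCols₂) := by
  simp only [residualMatrix, neg_neg, ← hxp, ← hxf, fromCols_toCols]

theorem residualMatrix_mul_stepMatrix_eq_zero_iff :
    residualMatrix Astar P₁ P₂ Q₁ Q₂ * stepMatrix A B Cm Dm E F = 0 ↔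
      ∀ x u y d, SigmaSol A B Cm Dm E F x u y d → ∀ t,
        x (t + 1) = Astar *ᵥ x t + P₁ *ᵥ u t + P₂ *ᵥ u (t + 1) + Q₁ *ᵥ y t + Q₂ *ᵥ y (t + 1) := by
  constructor
  · intro h x u y d hsol t
    rw [← sub_eq_zero, ← residualMatrix_mulVec_stackVec, hsol.stackVec_eq, mulVec_mulVec, h,
      zero_mulVec]
  · refine fun h => Matrix.ext_iff_mulVec.2 fun w => ?_
    obtain ⟨x, u, y, d, hsol, rfl⟩ := exists_sigmaSol_histVec_eq A B Cm Dm E F w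
    rw [← mulVec_mulVec, ← hsol.stackVec_eq, residualMatrix_mulVec_stackVec, ← h x u y d hsol,
      sub_self, zero_mulVec]

theorem IsAcceptor.step_eq (h : IsAcceptor A B Cm Dm E F Auio Bu By Du Dy)
    {x : ℕ → Fin n → ℝ} {u : ℕ → Fin m → ℝ} {y : ℕ → Fin p → ℝ} {d : ℕ → Fin r → ℝ}
    (hsol : SigmaSol A B Cm Dm E F x u y d) (t : ℕ) :
    x (t + 1) = Auio *ᵥ x t + (Bu - Auio * Du) *ᵥ u t + Du *ᵥ u (t + 1)
      + (By - Auio * Dy) *ᵥ y t + Dy *ᵥ y (t + 1) := by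
  obtain ⟨z, hz⟩ := h x u y d hsol
  rw [(hz (t + 1)).2, (hz t).1, (hz t).2]
  simp only [sub_mulVec, mulVec_add, ← mulVec_mulVec]
  abel

theorem IsUIO.schurStable (h : IsUIO A B Cm Dm E F Auio Bu By Du Dy) : SchurStable Auio := by
  refine SchurStable.of_tendsto_pow (Matrix.tendsto_zero_of_forall_tendsto_mulVec fun v => ?_)
  have hzero : SigmaSol A B Cm Dm E F 0 0 0 0 := fun t => by simp
  have hobs : ObsSol Auio Bu By Du Dy (fun t => Auio ^ t *ᵥ v) 0 0 (fun t => Auio ^ t *ᵥ v) :=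
    fun t => by simp [pow_succ', ← mulVec_mulVec]
  simpa using (h.2 _ _ _ _ _ _ hzero hobs).neg

theorem isUIO_of_forall_step_eq (hS : SchurStable Astar)
    (h : ∀ x u y d, SigmaSol A B Cm Dm E F x u y d → ∀ t,
      x (t + 1) = Astar *ᵥ x t + P₁ *ᵥ u t + P₂ *ᵥ u (t + 1) + Q₁ *ᵥ y t + Q₂ *ᵥ y (t + 1)) :
    IsUIO A B Cm Dm E F Astar (P₁ + Astar * P₂) (Q₁ + Astar * Q₂) P₂ Q₂ := by
  refine ⟨fun x u y d hsol => ⟨fun t => x t - P₂ *ᵥ u t - Q₂ *ᵥ y t,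
    fun t => ⟨?_, by dsimp only; abel⟩⟩, fun x u y d xh z hsol hobs => ?_⟩
  · dsimp only
    rw [h x u y d hsol t]
    simp only [add_mulVec, mulVec_sub, ← mulVec_mulVec]
    abel
  · have herr (t : ℕ) : x t - xh t = Astar ^ t *ᵥ (x 0 - xh 0) := by
      induction t with
      | zero => simp
      | succ t ih =>
        rw [pow_succ', ← mulVec_mulVec, ← ih, h x u y d hsol t, (hobs (t + 1)).2, (hobs t).1,
          (hobs t).2]
        simp only [add_mulVec, mulVec_add, mulVec_sub, ← mulVec_mulVec]
        abel
    refine Tendsto.congr (fun t => (herr t).symm) ?_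
    simpa [Function.comp_def] using
      ((continuous_id.matrix_mulVec (continuous_const (y := x 0 - xh 0))).tendsto 0).comp
      hS.tendsto_pow

end Observers

theorem theorem3_general {n m p r : ℕ}
    (A : Matrix (Fin n) (Fin n) ℝ) (B : Matrix (Fin n) (Fin m) ℝ)
    (Cm : Matrix (Fin p) (Fin n) ℝ) (Dm : Matrix (Fin p) (Fin m) ℝ)
    (E : Matrix (Fin n) (Fin r) ℝ) (F : Matrix (Fin p) (Fin r) ℝ)
    (T : ℕ)
    (xd : ℕ → Fin n → ℝ) (ud : ℕ → Fin m → ℝ) (yd : ℕ → Fin p → ℝ)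
    (dd : ℕ → Fin r → ℝ)
    (hgen1 : ∀ t : ℕ, t + 2 ≤ T →
      xd (t + 1) = A.mulVec (xd t) + B.mulVec (ud t) + E.mulVec (dd t))
    (hgen2 : ∀ t : ℕ, t + 1 ≤ T →
      yd t = Cm.mulVec (xd t) + Dm.mulVec (ud t) + F.mulVec (dd t))
    (hassump : (HistMat T xd ud dd).rank = n + ((m + m) + (r + r))) :
    (∃ (Auio : Matrix (Fin n) (Fin n) ℝ) (Bu : Matrix (Fin n) (Fin m) ℝ)
      (By : Matrix (Fin n) (Fin p) ℝ) (Du : Matrix (Fin n) (Fin m) ℝ)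
      (Dy : Matrix (Fin n) (Fin p) ℝ), IsUIO A B Cm Dm E F Auio Bu By Du Dy) ↔
      ∀ (q : ℕ) (Ψ : Matrix (Fin q) (RowIdx n m p) ℝ),
        (∀ v : RowIdx n m p → ℝ, Ψ.mulVec v = 0 ↔
          ∃ c : Fin (T - 1) → ℝ, v = (PhiD T xd ud yd).mulVec c) →
        ∃ (Ω : Matrix (Fin n) (Fin q) ℝ) (Astar : Matrix (Fin n) (Fin n) ℝ),
          SchurStable Astar ∧
          Ω * Matrix.of (fun i j => Ψ i (Sum.inl (Sum.inl j))) = -Astar ∧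
          Ω * Matrix.of (fun i j => Ψ i (Sum.inl (Sum.inr j))) = 1 := by
  constructor
  · rintro ⟨Auio, Bu, By, Du, Dy, hUIO⟩ q Ψ hΨ
    set G := residualMatrix Auio (Bu - Auio * Du) Du (By - Auio * Dy) Dy
    have hG : G * stepMatrix A B Cm Dm E F = 0 :=
      residualMatrix_mul_stepMatrix_eq_zero_iff.2 fun _ _ _ _ hsol => hUIO.1.step_eq hsol
    obtain ⟨Ω, hΩ⟩ := Matrix.exists_mul_eq_of_ker_le_s9 Ψ G fun v hv => by
      obtain ⟨c, rfl⟩ := (hΨ v).1 hv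
      rw [mulVec_mulVec, PhiD_eq_stepMatrix_mul_HistMat hgen1 hgen2, ← Matrix.mul_assoc, hG,
        Matrix.zero_mul, zero_mulVec]
    -- the blocks of `Ω * Ψ` are, definitionally, `Ω` times the blocks of `Ψ`
    exact ⟨Ω, Auio, hUIO.schurStable, congrArg (·.toCols₁.toCols₁) hΩ,
      congrArg (·.toCols₁.toCols₂) hΩ⟩
  · intro h
    obtain ⟨q, Ψ, hΨ⟩ := (LinearMap.range (PhiD T xd ud yd).mulVecLin).exists_matrix_ker_eq
    obtain ⟨Ω, Astar, hS, hxp, hxf⟩ := h q Ψ fun v => by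
      simp [hΨ, eq_comm]
    have hΨΦ : Ψ * PhiD T xd ud yd = 0 := Matrix.ext_iff_mulVec.2 fun c => by
      rw [← mulVec_mulVec, zero_mulVec, hΨ]
      exact LinearMap.mem_range_self _ c
    have hG := mul_stepMatrix_eq_zero_of_mul_PhiD_eq_zero hgen1 hgen2 hassump (G := Ω * Ψ)
      (by rw [Matrix.mul_assoc, hΨΦ, Matrix.mul_zero])
    rw [eq_residualMatrix (G := Ω * Ψ) hxp hxf] at hG
    exact ⟨_, _, _, _, _, isUIO_of_forall_step_eq hS
      (residualMatrix_mul_stepMatrix_eq_zero_iff.1 hG)⟩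

theorem theorem3 {n m p r : ℕ} (hn : 0 < n) (hm : 0 < m) (hp : 0 < p) (hr : 0 < r)
    (A : Matrix (Fin n) (Fin n) ℝ) (B : Matrix (Fin n) (Fin m) ℝ)
    (Cm : Matrix (Fin p) (Fin n) ℝ) (Dm : Matrix (Fin p) (Fin m) ℝ)
    (E : Matrix (Fin n) (Fin r) ℝ) (F : Matrix (Fin p) (Fin r) ℝ)
    (hEF : (Matrix.fromRows E F).rank = r)
    (T : ℕ) (hT : 2 ≤ T)
    (xd : ℕ → Fin n → ℝ) (ud : ℕ → Fin m → ℝ) (yd : ℕ → Fin p → ℝ)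
    (dd : ℕ → Fin r → ℝ)
    (hgen1 : ∀ t : ℕ, t + 2 ≤ T →
      xd (t + 1) = A.mulVec (xd t) + B.mulVec (ud t) + E.mulVec (dd t))
    (hgen2 : ∀ t : ℕ, t + 1 ≤ T →
      yd t = Cm.mulVec (xd t) + Dm.mulVec (ud t) + F.mulVec (dd t))
    (hassump : (HistMat T xd ud dd).rank = n + ((m + m) + (r + r))) :
    (∃ (Auio : Matrix (Fin n) (Fin n) ℝ) (Bu : Matrix (Fin n) (Fin m) ℝ)
      (By : Matrix (Fin n) (Fin p) ℝ) (Du : Matrix (Fin n) (Fin m) ℝ)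
      (Dy : Matrix (Fin n) (Fin p) ℝ), IsUIO A B Cm Dm E F Auio Bu By Du Dy) ↔
      ∀ (q : ℕ) (Ψ : Matrix (Fin q) (RowIdx n m p) ℝ),
        (∀ v : RowIdx n m p → ℝ, Ψ.mulVec v = 0 ↔
          ∃ c : Fin (T - 1) → ℝ, v = (PhiD T xd ud yd).mulVec c) →
        ∃ (Ω : Matrix (Fin n) (Fin q) ℝ) (Astar : Matrix (Fin n) (Fin n) ℝ),
          SchurStable Astar ∧
          Ω * Matrix.of (fun i j => Ψ i (Sum.inl (Sum.inl j))) = -Astar ∧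
          Ω * Matrix.of (fun i j => Ψ i (Sum.inl (Sum.inr j))) = 1 :=
  theorem3_general A B Cm Dm E F T xd ud yd dd hgen1 hgen2 hassump
end
end
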